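/- Let Γ be a finite abelian group, H ≤ Γ, and β = ⊕_{j=1}^N β_j^{k_j} a finite-dimensional H-module with β_j pairwise distinct characters of H. Let α be a character of Γ and J = {j : α|_H = β_j}. Then the restriction morphism π_α from (Ind_H^Γ End(β))^Γ ≅ ⊕_{j=1}^N M_{k_j}(ℂ) to End(p_α Ind_H^Γ(β))^Γ has kernel isomorphic to ⊕_{j ∉ J} M_{k_j}(ℂ) and image isomorphic to ⊕_{j ∈ J} M_{k_j}(ℂ). -/

import Mathlib

/- STATEMENT 16: Let Γ be a finite abelian group, H ≤ Γ, β = ⊕_{j=1}^N β_j^{k_j} with β_j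
pairwise distinct characters of H, α a character of Γ, and J = {j : α|_H = β_j}.  The algebra
(Ind_H^Γ End(β))^Γ ≅ End(β)^H acts on p_α Ind_H^Γ(β) (pointwise, in the function model), and
this restriction morphism π_α has kernel ≅ ⊕_{j ∉ J} M_{k_j}(ℂ) and image ≅ ⊕_{j ∈ J}
M_{k_j}(ℂ) under the canonical isomorphism End(β)^H ≅ ⊕_j M_{k_j}(ℂ).  Concretely: there is an
algebra isomorphism e : End(β)^H ≅ Π_j M_{k_j}(ℂ) (given by taking blocks) such that two
elements T, T' have the same image under π_α if and only if their blocks e T j and e T' j agree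
for all j ∈ J. -/

noncomputable section

variable (Γ : Type) [CommGroup Γ] [Fintype Γ] (H : Subgroup Γ)
  (N : ℕ) (k : Fin N → ℕ) (β : Fin N → (H →* ℂˣ)) (α : Γ →* ℂˣ)

/-- The space of `β = ⊕_j β_j^{k_j}`. -/
abbrev VB := ∀ j : Fin N, Fin (k j) → ℂ

/-- The action of `H` on `β`. -/
def actB (h : H) : VB N k →ₗ[ℂ] VB N k where
  toFun v := fun j i => (β j h : ℂ) * v j i
  map_add' := by intro x y; funext j i; simp [mul_add]
  map_smul' := by intro c x; funext j i; simp; ring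

/-- The algebra `End(β)^H ≅ (Ind_H^Γ End(β))^Γ` of `H`-equivariant endomorphisms. -/
def EndHB : Subalgebra ℂ (Module.End ℂ (VB N k)) where
  carrier := {T : Module.End ℂ (VB N k) | ∀ (h : H) (v : VB N k), T (actB Γ H N k β h v) = actB Γ H N k β h (T v)}
  add_mem' := by
    intro a b ha hb h v
    simp only [LinearMap.add_apply, ha h v, hb h v, map_add]
  mul_mem' := by
    intro a b ha hb h v
    simp only [Module.End.mul_apply, hb h v, ha h (b v)]
  algebraMap_mem' := by
    intro c h v
    simp [Module.algebraMap_end_apply, map_smul]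

/-- The isotypical component `p_α Ind_H^Γ(β)` in the function model of the induced
representation. -/
def WalphaB : Set (Γ → VB N k) :=
  {f | (∀ (h : H) (g : Γ), f (g * (h : Γ)) = actB Γ H N k β h (f g)) ∧
    ∀ γ g : Γ, f (g * γ) = (α γ : ℂ) • f g}


/- The `β j` being pairwise distinct characters, Schur's lemma says that an `H`-equivariant
endomorphism of `β` cannot mix the isotypic blocks, so `End(β)^H` is the algebra of
block-diagonal maps, i.e. `Π j, M_{k_j}(ℂ)`. A function `f` in `p_α Ind_H^Γ(β)` satisfies
`β_j(h) f(g)_j = α(h) f(g)_j`, so its values lie in the blocks `j ∈ J`; conversely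
`g ↦ α(g) • v` lies in `p_α Ind_H^Γ(β)` for every `v` in such a block. Hence `π_α T` sees exactly
the blocks of `T` over `J`. -/

namespace LinearMap

variable (R : Type*) {ι : Type*} (φ : ι → Type*) [CommSemiring R] [∀ i, AddCommMonoid (φ i)]
  [∀ i, Module R (φ i)]

def piMapAlgHom : (∀ i, Module.End R (φ i)) →ₐ[R] Module.End R (∀ i, φ i) where
  toFun := piMap
  map_one' := rfl
  map_mul' _ _ := rfl
  map_zero' := rfl
  map_add' _ _ := rfl
  commutes' _ := rfl

variable {R φ} [DecidableEq ι]

def diagBlock (T : Module.End R (∀ i, φ i)) (i : ι) : Module.End R (φ i) :=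
  proj i ∘ₗ T ∘ₗ single R φ i

lemma diagBlock_piMap (S : ∀ i, Module.End R (φ i)) : diagBlock (piMap S) = S := by
  ext i x
  simp [diagBlock]

lemma piMapAlgHom_injective : Function.Injective (piMapAlgHom R φ) :=
  Function.LeftInverse.injective diagBlock_piMap

end LinearMap

section

omit [Fintype Γ]
variable {Γ H N k β α}

lemma actB_apply (h : H) (v : VB N k) (j : Fin N) :
    actB Γ H N k β h v j = (β j h : ℂ) • v j :=
  rfl

lemma actB_single (h : H) (j : Fin N) (w : Fin (k j) → ℂ) :
    actB Γ H N k β h (Pi.single j w) = (β j h : ℂ) • Pi.single j w := by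
  ext i : 1
  rw [actB_apply, Pi.smul_apply]
  rcases eq_or_ne i j with rfl | hij
  · rfl
  · simp [Pi.single_eq_of_ne hij]

namespace WalphaB

lemma apply_eq_zero {f : Γ → VB N k} (hf : f ∈ WalphaB Γ H N k β α) {j : Fin N}
    (h : H) (hj : α h ≠ β j h) (g : Γ) : f g j = 0 := by
  have hcomm : (α h : ℂ) • f g j = (β j h : ℂ) • f g j := by
    rw [← Pi.smul_apply, ← hf.2, hf.1, actB_apply]
  by_contra hne
  exact hj (Units.ext (smul_left_injective ℂ hne hcomm))

lemma smul_single_mem {j : Fin N} (hj : ∀ h : H, α h = β j h) (w : Fin (k j) → ℂ) :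
    (fun g => (α g : ℂ) • Pi.single j w) ∈ WalphaB Γ H N k β α :=
  ⟨fun h g => by dsimp only; rw [map_smul, actB_single, map_mul, Units.val_mul, mul_smul, hj h],
    fun γ g => by dsimp only; rw [map_mul, Units.val_mul, mul_comm, mul_smul]⟩

end WalphaB

namespace EndHB

variable {T T' : Module.End ℂ (VB N k)}

lemma apply_single_apply_eq_zero (hT : T ∈ EndHB Γ H N k β) {i j : Fin N} (hij : β i ≠ β j)
    (w : Fin (k i) → ℂ) : T (Pi.single i w) j = 0 := by
  obtain ⟨h, hh⟩ := DFunLike.ne_iff.mp hij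
  have hcomm : (β i h : ℂ) • T (Pi.single i w) j = (β j h : ℂ) • T (Pi.single i w) j := by
    rw [← Pi.smul_apply, ← map_smul, ← actB_single, hT, actB_apply]
  by_contra hne
  exact hh (Units.ext (smul_left_injective ℂ hne hcomm))

lemma eq_piMap_diagBlock (hβ : Function.Injective β) (hT : T ∈ EndHB Γ H N k β) :
    T = LinearMap.piMap (LinearMap.diagBlock T) := by
  refine LinearMap.ext fun v => funext fun j => ?_
  conv_lhs => rw [← Finset.univ_sum_single v, map_sum, Finset.sum_apply]
  rw [Finset.sum_eq_single j (fun i _ hij => apply_single_apply_eq_zero hT (hβ.ne hij) _)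
    (by simp)]
  rfl

lemma piMap_mem (S : ∀ j, Module.End ℂ (Fin (k j) → ℂ)) :
    LinearMap.piMap S ∈ EndHB Γ H N k β := fun h v => funext fun j => by
  simp [actB_apply]

def blockAlgEquiv (hβ : Function.Injective β) :
    EndHB Γ H N k β ≃ₐ[ℂ] ∀ j, Module.End ℂ (Fin (k j) → ℂ) :=
  (AlgEquiv.ofBijective ((LinearMap.piMapAlgHom ℂ _).codRestrict _ piMap_mem)
    ⟨fun _ _ h => LinearMap.piMapAlgHom_injective (congrArg Subtype.val h),
      fun T => ⟨LinearMap.diagBlock T.1, Subtype.ext (eq_piMap_diagBlock hβ T.2).symm⟩⟩).symm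

lemma blockAlgEquiv_apply (hβ : Function.Injective β) (T : EndHB Γ H N k β) :
    blockAlgEquiv hβ T = LinearMap.diagBlock T.1 := by
  rw [blockAlgEquiv, AlgEquiv.symm_apply_eq]
  exact Subtype.ext (eq_piMap_diagBlock hβ T.2)

lemma comp_mem_WalphaB (hT : T ∈ EndHB Γ H N k β) {f : Γ → VB N k}
    (hf : f ∈ WalphaB Γ H N k β α) : (fun g => T (f g)) ∈ WalphaB Γ H N k β α :=
  ⟨fun h g => by dsimp only; rw [hf.1 h g, hT h],
    fun γ g => by dsimp only; rw [hf.2 γ g, map_smul]⟩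

theorem apply_eq_on_WalphaB_iff (hβ : Function.Injective β) (hT : T ∈ EndHB Γ H N k β)
    (hT' : T' ∈ EndHB Γ H N k β) :
    (∀ f ∈ WalphaB Γ H N k β α, ∀ g, T (f g) = T' (f g)) ↔
      ∀ j, (∀ h : H, α h = β j h) → LinearMap.diagBlock T j = LinearMap.diagBlock T' j := by
  constructor
  · intro hTT' j hj
    refine LinearMap.ext fun w => ?_
    simpa [LinearMap.diagBlock] using congrFun (hTT' _ (WalphaB.smul_single_mem hj w) 1) j
  · intro hJ f hf g
    rw [eq_piMap_diagBlock hβ hT, eq_piMap_diagBlock hβ hT']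
    funext j
    by_cases hj : ∀ h : H, α h = β j h
    · simp [hJ j hj]
    · obtain ⟨h, hh⟩ := not_forall.mp hj
      simp [WalphaB.apply_eq_zero hf h hh]

end EndHB

end

theorem stmt16 (hdist : ∀ i j, i ≠ j → β i ≠ β j) :
    ∃ e : ↥(EndHB Γ H N k β) ≃ₐ[ℂ] ((j : Fin N) → Matrix (Fin (k j)) (Fin (k j)) ℂ),
      -- e is the canonical block-decomposition isomorphism End(β)^H ≅ ⊕_j M_{k_j}(ℂ):
      (∀ (T : ↥(EndHB Γ H N k β)) (j : Fin N) (a b : Fin (k j)),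
        e T j a b = (T : Module.End ℂ (VB N k)) (Pi.single j (Pi.single b (1 : ℂ))) j a) ∧
      -- π_α: End(β)^H acts pointwise on p_α Ind_H^Γ(β):
      (∀ T : ↥(EndHB Γ H N k β), ∀ f ∈ WalphaB Γ H N k β α,
        (fun g => (T : Module.End ℂ (VB N k)) (f g)) ∈ WalphaB Γ H N k β α) ∧
      -- π_α T = π_α T' iff the blocks of T and T' agree over J = {j : α|_H = β_j};
      -- equivalently, ker π_α ≅ ⊕_{j ∉ J} M_{k_j}(ℂ) and im π_α ≅ ⊕_{j ∈ J} M_{k_j}(ℂ):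
      (∀ T T' : ↥(EndHB Γ H N k β),
        (∀ f ∈ WalphaB Γ H N k β α, ∀ g : Γ,
            (T : Module.End ℂ (VB N k)) (f g) = (T' : Module.End ℂ (VB N k)) (f g)) ↔
        (∀ j : Fin N, (∀ h : H, α (h : Γ) = β j h) → e T j = e T' j)) := by
  have hβ : Function.Injective β := fun i j => not_imp_not.mp (hdist i j)
  refine ⟨(EndHB.blockAlgEquiv hβ).trans
      (AlgEquiv.piCongrRight fun _ => LinearMap.toMatrixAlgEquiv'),
    fun T j a b => ?_, fun T _ hf => EndHB.comp_mem_WalphaB T.2 hf, fun T T' => ?_⟩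
  · simp [EndHB.blockAlgEquiv_apply, LinearMap.diagBlock]
  · simp only [EndHB.apply_eq_on_WalphaB_iff hβ T.2 T'.2, AlgEquiv.trans_apply,
      AlgEquiv.piCongrRight_apply, EndHB.blockAlgEquiv_apply, EmbeddingLike.apply_eq_iff_eq]

end
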